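/- Let d ≥ 1, H ∈ (0,1), A ∈ ℝ^{d×d}, and let (B_t)_{t∈[0,1]} be a d-dimensional fractional Brownian motion with Hurst parameter H with continuous sample paths. Let X̃_t := ∫₀^t exp((t−s)A) A B_s ds + B_t for t ∈ [0,1] (pathwise Bochner integral) and let a_{ij}(t) denote the (i,j) entry of exp(tA)A. Assume there exist i₀ ∈ {1,…,d} and C₁ ∈ (0,1) such that min_{t∈[0,1]} a_{i₀i₀}(t) ≥ −1 + C₁. Then for every u ∈ [0,1], the i₀-th coordinate satisfies E[ (X̃_u^{i₀})² ] ≥ C₁ · u^{2H}. -/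

import Mathlib

open MeasureTheory ProbabilityTheory Real Set
open scoped ProbabilityTheory

/-- The matrix `exp(tA) A`, whose entries are the `a_{ij}(t)` of the paper. -/
noncomputable def aEnt {d : ℕ} (A : Matrix (Fin d) (Fin d) ℝ) (t : ℝ) :
    Matrix (Fin d) (Fin d) ℝ :=
  NormedSpace.exp (t • A) * A

/-- The centered solution `X̃_t = ∫₀ᵗ exp((t-s)A) A B_s ds + B_t` (written
coordinatewise) of the fractional Ornstein–Uhlenbeck equation `dX_t = A X_t dt + dB_t^H`. -/
noncomputable def fouCentered {Ω : Type*} {d : ℕ} (A : Matrix (Fin d) (Fin d) ℝ)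
    (B : ℝ → Ω → Fin d → ℝ) (t : ℝ) (ω : Ω) (i : Fin d) : ℝ :=
  (∫ s in (0:ℝ)..t, ∑ j, aEnt A (t - s) i j * B s ω j) + B t ω i

/-- The constant `C₂ = max_{i,j} sup_{t ∈ [0,1]} |a_{ij}(t)|² +
max_{i,j} sup_{t ∈ [0,1]} |a_{ij}(t)| + 1`. -/
noncomputable def entC2 {d : ℕ} (A : Matrix (Fin d) (Fin d) ℝ) : ℝ :=
  (⨆ p : Fin d × Fin d × Icc (0:ℝ) 1, |aEnt A (p.2.2 : ℝ) p.1 p.2.1| ^ 2) +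
    (⨆ p : Fin d × Fin d × Icc (0:ℝ) 1, |aEnt A (p.2.2 : ℝ) p.1 p.2.1|) + 1

/-- A `d`-dimensional fractional Brownian motion with Hurst parameter `H` on `[0,1]`,
with continuous sample paths: every finite linear combination of coordinate values is a
centered Gaussian random variable, distinct coordinates are independent (their
cross-covariances vanish) and each coordinate has the fBM covariance
`E[B_t^i B_s^i] = (1/2)(t^(2H) + s^(2H) - |t-s|^(2H))`. -/
def IsMultiFBM {Ω : Type*} [MeasureSpace Ω] {d : ℕ} (H : ℝ)
    (B : ℝ → Ω → Fin d → ℝ) : Prop :=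
  (∀ t ∈ Icc (0:ℝ) 1, ∀ i, Measurable fun ω => B t ω i) ∧
  (∀ ω i, ContinuousOn (fun t => B t ω i) (Icc (0:ℝ) 1)) ∧
  (∀ (n : ℕ) (ts : Fin n → ℝ) (idx : Fin n → Fin d) (cs : Fin n → ℝ),
    (∀ k, ts k ∈ Icc (0:ℝ) 1) →
    ∃ v : NNReal,
      Measure.map (fun ω => ∑ k, cs k * B (ts k) ω (idx k)) (ℙ : Measure Ω) =
        gaussianReal 0 v) ∧
  (∀ (i j : Fin d) (s t : ℝ), s ∈ Icc (0:ℝ) 1 → t ∈ Icc (0:ℝ) 1 →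
    (∫ ω, B s ω i * B t ω j ∂(ℙ : Measure Ω)) =
      if i = j then (s ^ (2 * H) + t ^ (2 * H) - |t - s| ^ (2 * H)) / 2 else 0)

/-! Write `X̃_u^i = I + B_u^i` with `I = ∫₀ᵘ Σⱼ a_{ij}(u - s) B_s^j ds`. Then
`E[(X̃_u^i)²] ≥ 2 E[I B_u^i] + E[(B_u^i)²]`, and by Fubini and the independence of the
coordinates `E[I B_u^i] = ∫₀ᵘ a_{ii}(u - s) R_H(s, u) ds`, where `R_H = fbmCov H` is the
covariance of a one-dimensional fBM. Since `R_H(s, u) ≥ 0` for `0 ≤ s ≤ u` and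
`∫₀ᵘ R_H(s, u) ds = u^{2H+1}/2`, the hypothesis on `a_{ii}` gives
`E[(X̃_u^i)²] ≥ u^{2H} (1 - (1 - C₁) u) ≥ C₁ u^{2H}`.
Square integrability of `I`, which the expansion of the square needs, follows from Cauchy–Schwarz
in `s` and Fubini. -/

section Integration

variable {α β : Type*} [MeasurableSpace α] [MeasurableSpace β] {μ : Measure α}
  {ν : Measure β}

theorem sq_integral_le_measureReal_univ_mul_integral_sq [IsFiniteMeasure μ] {f : α → ℝ}
    (hf : MemLp f 2 μ) : (∫ x, f x ∂μ) ^ 2 ≤ μ.real univ * ∫ x, f x ^ 2 ∂μ := by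
  set m := μ.real univ
  set c := ∫ x, f x ∂μ
  have hf1 : Integrable f μ := hf.integrable one_le_two
  have hf2 : Integrable (fun x => f x ^ 2) μ := hf.integrable_sq
  have hexpand : ∫ x, (m * f x - c) ^ 2 ∂μ = m * (m * ∫ x, f x ^ 2 ∂μ - c ^ 2) := by
    have hpt (x : α) : (m * f x - c) ^ 2 = m ^ 2 * f x ^ 2 - 2 * m * c * f x + c ^ 2 := by ring
    simp_rw [hpt]
    have hint : Integrable (fun x => m ^ 2 * f x ^ 2 - 2 * m * c * f x) μ :=
      (hf2.const_mul _).sub (hf1.const_mul _)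
    rw [integral_add hint (integrable_const _), integral_sub (hf2.const_mul _) (hf1.const_mul _),
      integral_const_mul, integral_const_mul, integral_const, smul_eq_mul]
    ring
  have hnonneg : 0 ≤ m * (m * ∫ x, f x ^ 2 ∂μ - c ^ 2) :=
    hexpand ▸ integral_nonneg fun x => sq_nonneg _
  rcases (measureReal_nonneg : 0 ≤ m).eq_or_lt with hm | hm
  · have hμ : μ = 0 := Measure.measure_univ_eq_zero.1 <| by
      rwa [eq_comm, measureReal_eq_zero_iff] at hm
    simp [c, hμ]
  · nlinarith [(mul_nonneg_iff_of_pos_left hm).1 hnonneg]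

theorem memLp_two_integral_prod_right [IsFiniteMeasure μ] [SFinite ν] {F : α × β → ℝ}
    (hF : MemLp F 2 (μ.prod ν)) : MemLp (fun y => ∫ x, F (x, y) ∂μ) 2 ν := by
  have hF2 : Integrable (fun p => F p ^ 2) (μ.prod ν) := hF.integrable_sq
  refine (memLp_two_iff_integrable_sq hF.1.prod_swap.integral_prod_right').2 ?_
  refine (hF2.integral_prod_right.const_mul (μ.real univ)).mono'
    (hF.1.prod_swap.integral_prod_right'.pow 2) ?_
  filter_upwards [hF.1.prodMk_right, hF2.prod_left_ae] with y hmeas hint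
  rw [Real.norm_of_nonneg (sq_nonneg _)]
  exact sq_integral_le_measureReal_univ_mul_integral_sq
    ((memLp_two_iff_integrable_sq hmeas).2 hint)

theorem memLp_two_prod_of_integral_sq_le [IsFiniteMeasure μ] [SFinite ν] {F : α × β → ℝ}
    (hF : AEStronglyMeasurable F (μ.prod ν)) (hslice : ∀ x, MemLp (fun y => F (x, y)) 2 ν)
    (C : ℝ) (hC : ∀ x, ∫ y, F (x, y) ^ 2 ∂ν ≤ C) : MemLp F 2 (μ.prod ν) := by
  refine (memLp_two_iff_integrable_sq hF).2 <|
    (integrable_prod_iff (hF.pow 2)).2 ⟨ae_of_all _ fun x => (hslice x).integrable_sq, ?_⟩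
  refine Integrable.of_bound (hF.pow 2).norm.integral_prod_right' C (ae_of_all _ fun x => ?_)
  simp only [Pi.pow_apply, norm_pow, Real.norm_eq_abs, sq_abs]
  rw [abs_of_nonneg (integral_nonneg fun y => sq_nonneg _)]
  exact hC x

theorem two_mul_integral_mul_add_integral_sq_le {α : Type*} [MeasurableSpace α] {μ : Measure α}
    {X Y : α → ℝ} (hX : MemLp X 2 μ) (hY : MemLp Y 2 μ) :
    2 * ∫ x, X x * Y x ∂μ + ∫ x, Y x ^ 2 ∂μ ≤ ∫ x, (X x + Y x) ^ 2 ∂μ := by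
  have hXY : Integrable (fun x => 2 * (X x * Y x)) μ := (hX.integrable_mul hY).const_mul 2
  have hrest : Integrable (fun x => 2 * (X x * Y x) + Y x ^ 2) μ := hXY.add hY.integrable_sq
  have hexpand : ∫ x, (X x + Y x) ^ 2 ∂μ
      = ∫ x, X x ^ 2 ∂μ + (2 * ∫ x, X x * Y x ∂μ + ∫ x, Y x ^ 2 ∂μ) := by
    rw [← integral_const_mul, ← integral_add hXY hY.integrable_sq,
      ← integral_add hX.integrable_sq hrest]
    exact integral_congr_ae (ae_of_all _ fun x => by ring)
  have hX2 : 0 ≤ ∫ x, X x ^ 2 ∂μ := integral_nonneg fun x => sq_nonneg (X x)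
  linarith

end Integration

theorem measurable_uncurry_projIcc_of_continuousOn {β E : Type*} [MeasurableSpace β]
    [TopologicalSpace E] [TopologicalSpace.PseudoMetrizableSpace E] [MeasurableSpace E]
    [BorelSpace E] {a b : ℝ} (hab : a ≤ b) {X : ℝ → β → E}
    (hcont : ∀ y, ContinuousOn (fun t => X t y) (Icc a b))
    (hmeas : ∀ t ∈ Icc a b, Measurable (X t)) :
    Measurable fun p : ℝ × β => X (projIcc a b hab p.1) p.2 :=
  (measurable_uncurry_of_continuous_of_measurable (u := fun (t : Icc a b) => X t)
    (fun y => (hcont y).domRestrict) fun t => hmeas t t.2).comp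
    ((continuous_projIcc (h := hab)).measurable.prodMap measurable_id)

noncomputable def fbmCov (H s t : ℝ) : ℝ := (s ^ (2 * H) + t ^ (2 * H) - |t - s| ^ (2 * H)) / 2

section FbmCov

variable {H : ℝ}

theorem fbmCov_self (hH : 0 < H) (t : ℝ) : fbmCov H t t = t ^ (2 * H) := by
  simp [fbmCov, Real.zero_rpow (by positivity : 2 * H ≠ 0)]

theorem fbmCov_nonneg (hH : 0 ≤ H) {s t : ℝ} (hs : 0 ≤ s) (hst : s ≤ t) :
    0 ≤ fbmCov H s t := by
  have h1 : |t - s| ^ (2 * H) ≤ t ^ (2 * H) := by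
    rw [abs_of_nonneg (sub_nonneg.2 hst)]
    exact Real.rpow_le_rpow (sub_nonneg.2 hst) (by linarith) (by positivity)
  have h2 : 0 ≤ s ^ (2 * H) := Real.rpow_nonneg hs _
  unfold fbmCov
  linarith

theorem integral_fbmCov (hH : 0 ≤ H) {u : ℝ} (hu : 0 ≤ u) :
    ∫ s in Ioc 0 u, fbmCov H s u = u * u ^ (2 * H) / 2 := by
  have h2H : 0 ≤ 2 * H := by positivity
  have hpow : ∫ s in (0 : ℝ)..u, s ^ (2 * H) = u ^ (2 * H + 1) / (2 * H + 1) := by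
    simpa [Real.zero_rpow (by positivity : 2 * H + 1 ≠ 0)] using
      integral_rpow (r := 2 * H) (a := 0) (b := u) (Or.inl (by linarith))
  have hpow' : ∫ s in (0 : ℝ)..u, (u - s) ^ (2 * H) = u ^ (2 * H + 1) / (2 * H + 1) := by
    rw [intervalIntegral.integral_comp_sub_left (fun s => s ^ (2 * H)) u]
    simpa using hpow
  have hcont : Continuous fun s : ℝ => s ^ (2 * H) := Real.continuous_rpow_const h2H
  have habs : ∫ s in (0 : ℝ)..u, fbmCov H s u
      = ∫ s in (0 : ℝ)..u, (s ^ (2 * H) + u ^ (2 * H) - (u - s) ^ (2 * H)) / 2 := by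
    refine intervalIntegral.integral_congr fun s hs => ?_
    rw [uIcc_of_le hu] at hs
    simp only [fbmCov, abs_of_nonneg (sub_nonneg.2 hs.2)]
  have hcont' : IntervalIntegrable (fun s : ℝ => (u - s) ^ (2 * H)) volume 0 u :=
    (hcont.comp (continuous_sub_left u)).intervalIntegrable _ _
  rw [← intervalIntegral.integral_of_le hu, habs, intervalIntegral.integral_div,
    intervalIntegral.integral_sub ((hcont.intervalIntegrable _ _).add intervalIntegrable_const)
      hcont',
    intervalIntegral.integral_add (hcont.intervalIntegrable _ _) intervalIntegrable_const,
    hpow, hpow', intervalIntegral.integral_const, smul_eq_mul]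
  ring

theorem continuous_fbmCov_left {H : ℝ} (hH : 0 ≤ H) (t : ℝ) :
    Continuous fun s => fbmCov H s t :=
  have hpow : Continuous fun s : ℝ => s ^ (2 * H) := Real.continuous_rpow_const (by positivity)
  (((hpow.add continuous_const).sub (hpow.comp (continuous_const.sub continuous_id).abs)).div_const
    2 :)

end FbmCov

namespace IsMultiFBM

variable {Ω : Type*} [MeasureSpace Ω] {d : ℕ} {H : ℝ} {B : ℝ → Ω → Fin d → ℝ}

theorem integral_mul (hB : IsMultiFBM H B) {s t : ℝ} (hs : s ∈ Icc (0 : ℝ) 1)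
    (ht : t ∈ Icc (0 : ℝ) 1) (i j : Fin d) :
    ∫ ω, B s ω i * B t ω j = if i = j then fbmCov H s t else 0 :=
  hB.2.2.2 i j s t hs ht

theorem integral_sq (hB : IsMultiFBM H B) (hH : 0 < H) {t : ℝ} (ht : t ∈ Icc (0 : ℝ) 1)
    (i : Fin d) : ∫ ω, B t ω i ^ 2 = t ^ (2 * H) := by
  simp only [sq]
  rw [hB.integral_mul ht ht, if_pos rfl, fbmCov_self hH]

theorem memLp_two (hB : IsMultiFBM H B) {t : ℝ} (ht : t ∈ Icc (0 : ℝ) 1) (i : Fin d) :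
    MemLp (fun ω => B t ω i) 2 ℙ := by
  obtain ⟨v, hv⟩ := hB.2.2.1 1 ![t] ![i] ![1] (by simp [ht])
  simp only [Finset.univ_unique, Fin.default_eq_zero, Finset.sum_singleton, Matrix.cons_val_zero,
    one_mul] at hv
  have hmeas : AEMeasurable (fun ω => B t ω i) ℙ := (hB.1 t ht i).aemeasurable
  exact (memLp_map_measure_iff aestronglyMeasurable_id hmeas).1
    (hv ▸ memLp_id_gaussianReal 2)

theorem measurable_uncurry_projIcc (hB : IsMultiFBM H B) (i : Fin d) :
    Measurable fun p : ℝ × Ω => B (projIcc 0 1 zero_le_one p.1) p.2 i :=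
  measurable_uncurry_projIcc_of_continuousOn zero_le_one (X := fun t ω => B t ω i)
    (fun ω => hB.2.1 ω i) fun t ht => hB.1 t ht i

theorem memLp_two_prod_projIcc [SFinite (ℙ : Measure Ω)] (hB : IsMultiFBM H B) (hH : 0 < H)
    (μ : Measure ℝ) [IsFiniteMeasure μ] (i : Fin d) :
    MemLp (fun p : ℝ × Ω => B (projIcc 0 1 zero_le_one p.1) p.2 i) 2 (μ.prod ℙ) := by
  refine memLp_two_prod_of_integral_sq_le (hB.measurable_uncurry_projIcc i).aestronglyMeasurable
    (fun s => hB.memLp_two (projIcc 0 1 _ s).2 i) 1 fun s => ?_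
  obtain ⟨hs0, hs1⟩ := (projIcc 0 1 zero_le_one s).2
  rw [hB.integral_sq hH ⟨hs0, hs1⟩]
  exact Real.rpow_le_one hs0 hs1 (by positivity)

end IsMultiFBM

section FOU

variable {Ω : Type*} {d : ℕ} (A : Matrix (Fin d) (Fin d) ℝ) {H u : ℝ}

open scoped Matrix.Norms.Operator in
theorem continuous_aEnt_apply (i j : Fin d) :
    Continuous fun t => aEnt A t i j := by
  have hexp : Continuous fun t : ℝ => aEnt A t :=
    (NormedSpace.exp_continuous.comp (continuous_id.smul continuous_const)).mul continuous_const
  exact (continuous_apply j).comp ((continuous_apply i).comp hexp)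

/-- `B` is frozen outside `[0, 1]` so that the integrand is jointly measurable on `ℝ × Ω`. -/
noncomputable def fouIntegrand (B : ℝ → Ω → Fin d → ℝ) (u : ℝ) (i : Fin d) (p : ℝ × Ω) :
    ℝ :=
  ∑ j, aEnt A (u - p.1) i j * B (projIcc 0 1 zero_le_one p.1) p.2 j

theorem fouCentered_eq (B : ℝ → Ω → Fin d → ℝ) (hu : u ∈ Icc (0 : ℝ) 1) (ω : Ω)
    (i : Fin d) :
    fouCentered A B u ω i = (∫ s in Ioc 0 u, fouIntegrand A B u i (s, ω)) + B u ω i := by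
  rw [fouCentered, intervalIntegral.integral_of_le hu.1]
  congr 1
  refine setIntegral_congr_fun measurableSet_Ioc fun s hs => ?_
  simp only [fouIntegrand, projIcc_of_mem zero_le_one ⟨hs.1.le, hs.2.trans hu.2⟩]

theorem memLp_fouIntegrand [MeasureSpace Ω] [IsFiniteMeasure (ℙ : Measure Ω)]
    {B : ℝ → Ω → Fin d → ℝ} (hB : IsMultiFBM H B) (hH : 0 < H) (i : Fin d) :
    MemLp (fouIntegrand A B u i) 2 ((volume.restrict (Ioc 0 u)).prod ℙ) := by
  refine memLp_finsetSum _ fun j _ => MemLp.mul' (p := ⊤) (hB.memLp_two_prod_projIcc hH _ j) ?_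
  have hcont : Continuous fun s => aEnt A (u - s) i j :=
    (continuous_aEnt_apply A i j).comp (continuous_sub_left u)
  obtain ⟨K, hK⟩ := isCompact_Icc.exists_bound_of_continuousOn hcont.continuousOn
  refine MemLp.comp_fst (memLp_top_of_bound hcont.aestronglyMeasurable K ?_) ℙ
  exact ae_restrict_of_forall_mem measurableSet_Ioc fun s hs =>
    hK s (Ioc_subset_Icc_self (by simpa using hs) : s ∈ Icc 0 u)

theorem integral_fouIntegrand_mul [MeasureSpace Ω] [IsFiniteMeasure (ℙ : Measure Ω)]
    {B : ℝ → Ω → Fin d → ℝ} (hB : IsMultiFBM H B) (hH : 0 < H) (hu : u ∈ Icc (0 : ℝ) 1)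
    (i : Fin d) :
    ∫ ω, (∫ s in Ioc 0 u, fouIntegrand A B u i (s, ω)) * B u ω i
      = ∫ s in Ioc 0 u, aEnt A (u - s) i i * fbmCov H s u := by
  have hint : Integrable (fun p : ℝ × Ω => fouIntegrand A B u i p * B u p.2 i)
      ((volume.restrict (Ioc 0 u)).prod ℙ) :=
    (memLp_fouIntegrand A hB hH i).integrable_mul ((hB.memLp_two hu i).comp_snd _)
  simp_rw [← integral_mul_const]
  rw [← integral_integral_swap (f := fun s ω => fouIntegrand A B u i (s, ω) * B u ω i) hint]
  refine setIntegral_congr_fun measurableSet_Ioc fun s hs => ?_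
  have hs1 : s ∈ Icc (0 : ℝ) 1 := ⟨hs.1.le, hs.2.trans hu.2⟩
  simp only [fouIntegrand, projIcc_of_mem zero_le_one hs1, Finset.sum_mul, mul_assoc]
  have hterm (j : Fin d) : Integrable (fun ω => aEnt A (u - s) i j * (B s ω j * B u ω i)) ℙ :=
    Integrable.const_mul ((hB.memLp_two hs1 j).integrable_mul (hB.memLp_two hu i)) _
  rw [integral_finsetSum _ fun j _ => hterm j]
  simp [integral_const_mul, hB.integral_mul hs1 hu]

theorem le_integral_aEnt_mul_fbmCov {c : ℝ} (hH : 0 ≤ H) (hu : u ∈ Icc (0 : ℝ) 1)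
    {i : Fin d} (hdiag : ∀ t ∈ Icc (0 : ℝ) 1, c ≤ aEnt A t i i) :
    c * (u * u ^ (2 * H) / 2) ≤ ∫ s in Ioc 0 u, aEnt A (u - s) i i * fbmCov H s u := by
  rw [← integral_fbmCov hH hu.1, ← integral_const_mul]
  refine setIntegral_mono_on (continuous_const.mul (continuous_fbmCov_left hH u)).integrableOn_Ioc
    (((continuous_aEnt_apply A i i).comp (continuous_sub_left u)).mul
      (continuous_fbmCov_left hH u)).integrableOn_Ioc measurableSet_Ioc fun s hs => ?_
  exact mul_le_mul_of_nonneg_right (hdiag _ ⟨by linarith [hs.2], by linarith [hs.1, hu.2]⟩)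
    (fbmCov_nonneg hH hs.1.le hs.2)

end FOU

theorem fou_multidim_second_moment_lower_general {Ω : Type*} [MeasureSpace Ω]
    [IsProbabilityMeasure (ℙ : Measure Ω)] (d : ℕ) (H : ℝ)
    (hH : H ∈ Ioo (0:ℝ) 1) (A : Matrix (Fin d) (Fin d) ℝ)
    (B : ℝ → Ω → Fin d → ℝ) (hB : IsMultiFBM H B)
    (i₀ : Fin d) (C₁ : ℝ) (hC₁ : C₁ ∈ Ioo (0:ℝ) 1)
    (hdiag : ∀ t ∈ Icc (0:ℝ) 1, -1 + C₁ ≤ aEnt A t i₀ i₀) :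
    ∀ u ∈ Icc (0:ℝ) 1,
      C₁ * u ^ (2 * H) ≤ ∫ ω, (fouCentered A B u ω i₀) ^ 2 ∂(ℙ : Measure Ω) := by
  intro u hu
  set I : Ω → ℝ := fun ω => ∫ s in Ioc 0 u, fouIntegrand A B u i₀ (s, ω)
  have hI : MemLp I 2 ℙ := memLp_two_integral_prod_right (memLp_fouIntegrand A hB hH.1 i₀)
  have hu2H : 0 ≤ u ^ (2 * H) := rpow_nonneg hu.1 _
  calc C₁ * u ^ (2 * H) ≤ 2 * ((-1 + C₁) * (u * u ^ (2 * H) / 2)) + u ^ (2 * H) := by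
        nlinarith [mul_nonneg (mul_nonneg (sub_nonneg.2 hC₁.2.le) (sub_nonneg.2 hu.2)) hu2H]
    _ ≤ 2 * (∫ ω, I ω * B u ω i₀) + ∫ ω, B u ω i₀ ^ 2 := by
        rw [show ∫ ω, I ω * B u ω i₀ = _ from integral_fouIntegrand_mul A hB hH.1 hu i₀,
          hB.integral_sq hH.1 hu i₀]
        gcongr
        exact le_integral_aEnt_mul_fbmCov A hH.1.le hu hdiag
    _ ≤ ∫ ω, (I ω + B u ω i₀) ^ 2 :=
        two_mul_integral_mul_add_integral_sq_le hI (hB.memLp_two hu i₀)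
    _ = ∫ ω, (fouCentered A B u ω i₀) ^ 2 := by simp only [I, fouCentered_eq A B hu]

/-- For `d ≥ 1`, `H ∈ (0,1)`, `A ∈ ℝ^(d×d)`, a `d`-dimensional fBM `B`
with Hurst parameter `H`, and `i₀`, `C₁ ∈ (0,1)` with `min_{t ∈ [0,1]} a_{i₀i₀}(t) ≥ -1 + C₁`,
the `i₀`-th coordinate of the centered fOU process `X̃` satisfies
`E[(X̃_u^{i₀})²] ≥ C₁ u^(2H)` for every `u ∈ [0,1]`. -/
theorem fou_multidim_second_moment_lower {Ω : Type*} [MeasureSpace Ω]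
    [IsProbabilityMeasure (ℙ : Measure Ω)] (d : ℕ) (hd : 1 ≤ d) (H : ℝ)
    (hH : H ∈ Ioo (0:ℝ) 1) (A : Matrix (Fin d) (Fin d) ℝ)
    (B : ℝ → Ω → Fin d → ℝ) (hB : IsMultiFBM H B)
    (i₀ : Fin d) (C₁ : ℝ) (hC₁ : C₁ ∈ Ioo (0:ℝ) 1)
    (hdiag : ∀ t ∈ Icc (0:ℝ) 1, -1 + C₁ ≤ aEnt A t i₀ i₀) :
    ∀ u ∈ Icc (0:ℝ) 1,
      C₁ * u ^ (2 * H) ≤ ∫ ω, (fouCentered A B u ω i₀) ^ 2 ∂(ℙ : Measure Ω) :=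
  fou_multidim_second_moment_lower_general d H hH A B hB i₀ C₁ hC₁ hdiag
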